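/- Let G be a connected graph and let u ≠ v be two non-adjacent vertices at graph distance greater than 2 (so u and v have no common neighbor), such that every neighbor x of u satisfies d(x) ≤ d(u) and every neighbor x of v satisfies d(x) ≤ d(v). Let Γ be the graph obtained from G by contracting u and v into a single vertex z. Then the stationary distribution of the biased random walk on Γ satisfies π_Γ(z) = π_G(u) + π_G(v), and π_Γ(x) = π_G(x) for every vertex x ∉ {u,v}. -/

import Mathlib

open Filter
open scoped BigOperators Classical

noncomputable section

namespace CF

variable {V : Type*} [Fintype V] [DecidableEq V]

/-- The degree of a vertex `v` in the graph `G`. -/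
def deg (G : SimpleGraph V) (v : V) : ℕ :=
  (Finset.univ.filter fun w => G.Adj v w).card

/-- The edge bias `ψ(v,w) = 1 / min(d(v), d(w))` for adjacent `v, w`, and `0` otherwise. -/
def psi (G : SimpleGraph V) (v w : V) : ℝ :=
  if G.Adj v w then ((min (deg G v) (deg G w) : ℕ) : ℝ)⁻¹ else 0

/-- `Ψ(v) = Σ_{w ∈ N(v)} ψ(v,w)`  (the sum may be taken over all `w` since `ψ` vanishes
off the neighbourhood). -/
def Psi (G : SimpleGraph V) (v : V) : ℝ := ∑ w, psi G v w

/-- The stationary distribution `π(v) = Ψ(v) / Σ_u Ψ(u)` of the biased random walk. -/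
def statPi (G : SimpleGraph V) (v : V) : ℝ := Psi G v / ∑ u, Psi G u

/-- The one-step transition probability `P(v,w) = ψ(v,w)/Ψ(v)` of the biased random walk. -/
def step (G : SimpleGraph V) (v w : V) : ℝ := psi G v w / Psi G v

/-- The transition matrix of the biased random walk. -/
def stepMatrix (G : SimpleGraph V) : Matrix V V ℝ := Matrix.of fun v w => step G v w

/-- `R_v = Σ_{t=0}^{T-1} P^{(t)}(v,v)`, the expected number of visits to `v`
(including time 0) of the biased walk started at `v` during the first `T` steps. -/
def Rv (G : SimpleGraph V) (T : ℕ) (v : V) : ℝ :=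
  ∑ t ∈ Finset.range T, (stepMatrix G ^ t) v v

/-- Probability that a walk with transition kernel `P` follows the trajectory `x`
(conditional on starting at `x 0`). -/
def trajProbP (P : V → V → ℝ) {t : ℕ} (x : Fin (t + 1) → V) : ℝ :=
  ∏ i : Fin t, P (x i.castSucc) (x i.succ)

/-- Probability that the walk with kernel `P` started at `u` has not visited every
vertex among its positions at times `0, 1, …, t`. -/
def notCoveredProbP (P : V → V → ℝ) (u : V) (t : ℕ) : ℝ :=
  ∑ x ∈ Finset.univ.filter (fun x : Fin (t + 1) → V =>
      x 0 = u ∧ Finset.image x Finset.univ ≠ Finset.univ), trajProbP P x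

/-- Expected cover time of the walk with kernel `P` started from `u`,
via `E[T_cov] = Σ_{t ≥ 0} P(T_cov > t)`. -/
def coverTimeFromP (P : V → V → ℝ) (u : V) : ℝ := ∑' t : ℕ, notCoveredProbP P u t

/-- Cover time of the walk with kernel `P`: the maximum over starting vertices. -/
def coverTimeP (P : V → V → ℝ) : ℝ := ⨆ u, coverTimeFromP P u

/-- Expected time for the biased random walk started at `u` to visit every vertex. -/
def coverTimeFrom (G : SimpleGraph V) (u : V) : ℝ := coverTimeFromP (step G) u

/-- The cover time `C̄(G)` of the biased random walk on `G`. -/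
def coverTime (G : SimpleGraph V) : ℝ := coverTimeP (step G)

/-- Probability that the biased walk on `G` started at `w` avoids the set `F`
at all times `0, 1, …, t`. -/
def avoidProb (G : SimpleGraph V) (w : V) (t : ℕ) (F : Finset V) : ℝ :=
  ∑ x ∈ Finset.univ.filter (fun x : Fin (t + 1) → V =>
      x 0 = w ∧ ∀ i, x i ∉ F), trajProbP (step G) x

/-- `e(S,S)`: the number of edges of `G` with both endpoints in `S`. -/
def eIn (G : SimpleGraph V) (S : Finset V) : ℕ :=
  (Finset.univ.filter fun e : Sym2 V => e ∈ G.edgeSet ∧ ∀ x ∈ e, x ∈ S).card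

/-- `e(S, S̄)`: the number of edges of `G` with exactly one endpoint in `S`. -/
def eCross (G : SimpleGraph V) (S : Finset V) : ℕ :=
  (Finset.univ.filter fun e : Sym2 V =>
    e ∈ G.edgeSet ∧ ∃ x ∈ S, ∃ y ∈ Sᶜ, e = s(x, y)).card

/-- The graph obtained from `G` by contracting the (non-adjacent) vertices `u` and `v`
into a single vertex, represented by `u`; the vertex `v` is left isolated. -/
def contract (G : SimpleGraph V) (u v : V) : SimpleGraph V :=
  SimpleGraph.fromRel fun x y =>
    x ≠ v ∧ y ≠ v ∧ (G.Adj x y ∨ (x = u ∧ G.Adj v y))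

/-- The graph on `Fin n` determined by a configuration of edge indicators. -/
def graphOf {n : ℕ} (ω : Sym2 (Fin n) → Bool) : SimpleGraph (Fin n) :=
  SimpleGraph.fromRel fun x y => ω s(x, y)

/-- The product Bernoulli(p) weight of a configuration of edge indicators. -/
def wt {n : ℕ} (p : ℝ) (ω : Sym2 (Fin n) → Bool) : ℝ :=
  ∏ e : Sym2 (Fin n), (if ω e then p else 1 - p)

/-- The probability that the Erdős–Rényi random graph `G_{n,p}` satisfies `Q`. -/
def gnp (n : ℕ) (p : ℝ) (Q : SimpleGraph (Fin n) → Prop) : ℝ :=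
  ∑ ω ∈ Finset.univ.filter (fun ω : Sym2 (Fin n) → Bool => Q (graphOf ω)), wt p ω

/-- A graph `G` on vertex set `Fin n` is *typical* (for the parameters `ε` and `c`,
with `p = c log n / n`) if it satisfies conditions (a)–(i) of Lemma 4 (Cooper–Frieze–Petti). -/
def Typical (ε c : ℝ) {n : ℕ} (G : SimpleGraph (Fin n)) : Prop :=
  let p : ℝ := c * Real.log n / n
  let np : ℝ := (n : ℝ) * p
  let Lam : ℝ := Real.log (Real.log n)
  let A : Finset (Fin n) := Finset.univ.filter fun v => (deg G v : ℝ) < np / 100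
  -- (a) connectivity
  G.Connected ∧
  -- (b) few vertices of low degree
  (((Finset.univ.filter fun v : Fin n => (deg G v : ℝ) < (1 - ε) * np).card : ℝ)
      ≤ (n : ℝ) ^ (1 - ε ^ 2 * c / 4)) ∧
  -- (c) few vertices of high degree
  (((Finset.univ.filter fun v : Fin n => (1 + ε) * np < (deg G v : ℝ)).card : ℝ)
      ≤ (n : ℝ) ^ (1 - ε ^ 2 * c / 4)) ∧
  -- (d) maximum degree
  (∀ v : Fin n, (deg G v : ℝ) ≤ 4 * np) ∧
  -- (e) few vertices of each small degree
  (∀ k : ℕ, (k : ℝ) ≤ Lam →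
      ((Finset.univ.filter fun v : Fin n => deg G v = k).card : ℝ)
        ≤ (3 * Real.log n) ^ (k + 1)) ∧
  -- (f)(i) the set A of small-degree vertices is small
  ((A.card : ℝ) < (n : ℝ) ^ ((17 : ℝ) / 12 - c)) ∧
  -- (f)(ii) no vertex of A within distance Λ of a short cycle
  (∀ v ∈ A, ∀ x : Fin n, ∀ w : G.Walk x x, w.IsCycle → (w.length : ℝ) < Lam →
      ∀ y ∈ w.support, Lam < (G.dist v y : ℝ)) ∧
  -- (f)(iii) vertices of A are far apart
  (∀ u ∈ A, ∀ v ∈ A, u ≠ v → Lam < (G.dist u v : ℝ)) ∧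
  -- (g) no small dense subgraphs
  (np ≤ (n : ℝ) ^ ((1 : ℝ) / 100) →
      ∀ S : Finset (Fin n), S.card ≤ 50 → eIn G S ≤ S.card) ∧
  -- (h) edge expansion of large sets
  (∀ S : Finset (Fin n), 1 / p ≤ (S.card : ℝ) → (S.card : ℝ) ≤ (n : ℝ) / 2 →
      (S.card : ℝ) * ((n : ℝ) - S.card) * p / 2 ≤ (eCross G S : ℝ)) ∧
  -- (i) small sets are sparse
  (∀ S : Finset (Fin n), (S.card : ℝ) < 1 / p →
      (eIn G S : ℝ) < (S.card : ℝ) * np / 1000)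

end CF

/-!
Contracting `u` and `v` changes `ψ` only on edges at `u` and `v`. Since `u` and `v` have no
common neighbour, every other vertex keeps its degree and `z` gets degree `d(u) + d(v)`; since
`u` and `v` dominate the degrees of their neighbours, `ψ(u,x) = 1/d(x)` both before and after the
contraction, so `ψ_Γ(z,x) = ψ(u,x) + ψ(v,x)`. Hence `Ψ_Γ(z) = Ψ(u) + Ψ(v)`, `Ψ_Γ(x) = Ψ(x)` for
every other `x`, and the normalising total `Σ Ψ` is unchanged.
-/

theorem Fintype.sum_eq_sum_of_merge {V M : Type*} [Fintype V] [AddCommMonoid M]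
    {f g : V → M} {u v : V} (huv : u ≠ v)
    (hu : g u = f u + f v) (hv : g v = 0) (hother : ∀ x, x ≠ u → x ≠ v → g x = f x) :
    ∑ x, g x = ∑ x, f x := by
  classical
  have expand : ∀ h : V → M,
      ∑ x, h x = h u + (h v + ∑ x ∈ (Finset.univ.erase u).erase v, h x) := fun h => by
    rw [Finset.add_sum_erase _ _ (Finset.mem_erase.2 ⟨huv.symm, Finset.mem_univ v⟩),
      Finset.add_sum_erase _ _ (Finset.mem_univ u)]
  have hrest : ∑ x ∈ (Finset.univ.erase u).erase v, g x
      = ∑ x ∈ (Finset.univ.erase u).erase v, f x :=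
    Finset.sum_congr rfl fun x hx => by
      obtain ⟨hxv, hx⟩ := Finset.mem_erase.1 hx
      exact hother x (Finset.ne_of_mem_erase hx) hxv
  rw [expand g, expand f, hu, hv, hrest, zero_add, add_assoc]

theorem ite_or_eq_add_of_not_and {M : Type*} [AddMonoid M] {p q : Prop} [Decidable p]
    [Decidable q] [Decidable (p ∨ q)] (a : M) (h : ¬(p ∧ q)) :
    (if p ∨ q then a else 0) = (if p then a else 0) + (if q then a else 0) := by
  by_cases hp : p <;> by_cases hq : q <;> simp_all

theorem SimpleGraph.not_adj_and_adj_of_two_lt_dist {V : Type*} {G : SimpleGraph V} {u v : V}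
    (h : 2 < G.dist u v) (w : V) : ¬(G.Adj u w ∧ G.Adj v w) := fun ⟨hu, hv⟩ =>
  (G.dist_le (.cons hu (.cons hv.symm .nil))).not_gt h

namespace CF

variable {V : Type*} {G : SimpleGraph V} {u v x w : V}

theorem contract_adj :
    (contract G u v).Adj x w ↔
      x ≠ w ∧ x ≠ v ∧ w ≠ v ∧ (G.Adj x w ∨ (x = u ∧ G.Adj v w) ∨ (w = u ∧ G.Adj v x)) := by
  unfold contract
  rw [SimpleGraph.fromRel_adj]
  constructor
  · rintro ⟨hxw, ⟨hx, hw, h | h⟩ | ⟨hw, hx, h | h⟩⟩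
    · exact ⟨hxw, hx, hw, .inl h⟩
    · exact ⟨hxw, hx, hw, .inr (.inl h)⟩
    · exact ⟨hxw, hx, hw, .inl h.symm⟩
    · exact ⟨hxw, hx, hw, .inr (.inr h)⟩
  · rintro ⟨hxw, hx, hw, h | h | h⟩
    · exact ⟨hxw, .inl ⟨hx, hw, .inl h⟩⟩
    · exact ⟨hxw, .inl ⟨hx, hw, .inr h⟩⟩
    · exact ⟨hxw, .inr ⟨hw, hx, .inr h⟩⟩

theorem contract_not_adj_right : ¬(contract G u v).Adj x v :=
  fun h => (contract_adj.1 h).2.2.1 rfl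

theorem contract_adj_merged_of_ne (huv : u ≠ v) (hwu : w ≠ u) (hwv : w ≠ v) :
    (contract G u v).Adj u w ↔ G.Adj u w ∨ G.Adj v w := by
  rw [contract_adj]
  constructor
  · rintro ⟨-, -, -, h | ⟨-, h⟩ | ⟨rfl, -⟩⟩
    · exact .inl h
    · exact .inr h
    · exact absurd rfl hwu
  · rintro (h | h)
    · exact ⟨hwu.symm, huv, hwv, .inl h⟩
    · exact ⟨hwu.symm, huv, hwv, .inr (.inl ⟨rfl, h⟩)⟩

theorem contract_adj_merged (huv : u ≠ v) (hnadj : ¬G.Adj u v) :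
    (contract G u v).Adj u w ↔ G.Adj u w ∨ G.Adj v w := by
  rcases eq_or_ne w u with rfl | hwu
  · exact iff_of_false (SimpleGraph.irrefl _) (by rintro (h | h); exacts [G.irrefl h, hnadj h.symm])
  rcases eq_or_ne w v with rfl | hwv
  · exact iff_of_false contract_not_adj_right (by rintro (h | h); exacts [hnadj h, G.irrefl h])
  exact contract_adj_merged_of_ne huv hwu hwv

theorem contract_adj_of_ne (hxu : x ≠ u) (hxv : x ≠ v) (hwu : w ≠ u) (hwv : w ≠ v) :
    (contract G u v).Adj x w ↔ G.Adj x w := by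
  rw [contract_adj]
  constructor
  · rintro ⟨-, -, -, h | ⟨rfl, -⟩ | ⟨rfl, -⟩⟩
    · exact h
    · exact absurd rfl hxu
    · exact absurd rfl hwu
  · exact fun h => ⟨h.ne, hxv, hwv, .inl h⟩

variable [Fintype V]

theorem deg_eq_sum_ite (G : SimpleGraph V) (x : V) :
    deg G x = ∑ w, if G.Adj x w then 1 else 0 :=
  Finset.card_filter _ _

theorem psi_comm (G : SimpleGraph V) (x w : V) : psi G x w = psi G w x := by
  unfold psi
  by_cases h : G.Adj x w
  · rw [if_pos h, if_pos h.symm, min_comm]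
  · rw [if_neg h, if_neg fun h' => h h'.symm]

theorem psi_eq_ite_of_deg_le (h : ∀ w, G.Adj x w → deg G w ≤ deg G x) (w : V) :
    psi G x w = if G.Adj x w then (deg G w : ℝ)⁻¹ else 0 := by
  unfold psi
  split_ifs with hxw
  · rw [min_eq_right (h w hxw)]
  · rfl

theorem deg_contract_merged (huv : u ≠ v) (hnadj : ¬G.Adj u v)
    (hcn : ∀ w, ¬(G.Adj u w ∧ G.Adj v w)) :
    deg (contract G u v) u = deg G u + deg G v := by
  simp only [deg_eq_sum_ite, ← Finset.sum_add_distrib, contract_adj_merged huv hnadj]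
  exact Finset.sum_congr rfl fun w _ => ite_or_eq_add_of_not_and 1 (hcn w)

theorem deg_contract_of_ne (huv : u ≠ v) (hcn : ∀ w, ¬(G.Adj u w ∧ G.Adj v w))
    (hxu : x ≠ u) (hxv : x ≠ v) : deg (contract G u v) x = deg G x := by
  rw [deg_eq_sum_ite, deg_eq_sum_ite]
  refine Fintype.sum_eq_sum_of_merge huv ?_ (if_neg contract_not_adj_right)
    fun w hwu hwv => by rw [contract_adj_of_ne hxu hxv hwu hwv]
  rw [(contract G u v).adj_comm, contract_adj_merged_of_ne huv hxu hxv, G.adj_comm x u,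
    G.adj_comm x v]
  convert ite_or_eq_add_of_not_and 1 (hcn x)

theorem psi_contract_isolated : psi (contract G u v) x v = 0 :=
  if_neg contract_not_adj_right

theorem psi_contract_of_ne (huv : u ≠ v) (hcn : ∀ w, ¬(G.Adj u w ∧ G.Adj v w))
    (hxu : x ≠ u) (hxv : x ≠ v) (hwu : w ≠ u) (hwv : w ≠ v) :
    psi (contract G u v) x w = psi G x w := by
  unfold psi
  rw [contract_adj_of_ne hxu hxv hwu hwv, deg_contract_of_ne huv hcn hxu hxv,
    deg_contract_of_ne huv hcn hwu hwv]

theorem psi_contract_merged (huv : u ≠ v) (hnadj : ¬G.Adj u v)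
    (hcn : ∀ w, ¬(G.Adj u w ∧ G.Adj v w))
    (hu : ∀ x, G.Adj u x → deg G x ≤ deg G u) (hv : ∀ x, G.Adj v x → deg G x ≤ deg G v)
    (w : V) : psi (contract G u v) u w = psi G u w + psi G v w := by
  have hdeg : ∀ w, (contract G u v).Adj u w → deg (contract G u v) w = deg G w :=
    fun w h => deg_contract_of_ne huv hcn h.ne' (contract_adj.1 h).2.2.1
  have hmax :
      ∀ w, (contract G u v).Adj u w → deg (contract G u v) w ≤ deg (contract G u v) u := by
    intro w h
    rw [hdeg w h, deg_contract_merged huv hnadj hcn]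
    rcases (contract_adj_merged huv hnadj).1 h with h | h
    · exact (hu w h).trans (Nat.le_add_right _ _)
    · exact (hv w h).trans (Nat.le_add_left _ _)
  calc psi (contract G u v) u w
      = if G.Adj u w ∨ G.Adj v w then (deg G w : ℝ)⁻¹ else 0 := by
        rw [psi_eq_ite_of_deg_le hmax]
        by_cases h : (contract G u v).Adj u w
        · rw [if_pos h, if_pos ((contract_adj_merged huv hnadj).1 h), hdeg w h]
        · rw [if_neg h, if_neg (mt (contract_adj_merged huv hnadj).2 h)]
    _ = psi G u w + psi G v w := by
        rw [psi_eq_ite_of_deg_le hu, psi_eq_ite_of_deg_le hv]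
        convert ite_or_eq_add_of_not_and _ (hcn w)

theorem psi_contract_merged_right (huv : u ≠ v) (hnadj : ¬G.Adj u v)
    (hcn : ∀ w, ¬(G.Adj u w ∧ G.Adj v w))
    (hu : ∀ x, G.Adj u x → deg G x ≤ deg G u) (hv : ∀ x, G.Adj v x → deg G x ≤ deg G v)
    (x : V) : psi (contract G u v) x u = psi G x u + psi G x v := by
  rw [psi_comm, psi_contract_merged huv hnadj hcn hu hv, psi_comm G u, psi_comm G v]

theorem Psi_contract_isolated : Psi (contract G u v) v = 0 :=
  Finset.sum_eq_zero fun w _ => by rw [psi_comm]; exact psi_contract_isolated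

theorem Psi_contract_merged (huv : u ≠ v) (hnadj : ¬G.Adj u v)
    (hcn : ∀ w, ¬(G.Adj u w ∧ G.Adj v w))
    (hu : ∀ x, G.Adj u x → deg G x ≤ deg G u) (hv : ∀ x, G.Adj v x → deg G x ≤ deg G v) :
    Psi (contract G u v) u = Psi G u + Psi G v := by
  simp only [Psi, psi_contract_merged huv hnadj hcn hu hv, Finset.sum_add_distrib]

theorem Psi_contract_of_ne (huv : u ≠ v) (hnadj : ¬G.Adj u v)
    (hcn : ∀ w, ¬(G.Adj u w ∧ G.Adj v w))
    (hu : ∀ x, G.Adj u x → deg G x ≤ deg G u) (hv : ∀ x, G.Adj v x → deg G x ≤ deg G v)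
    (hxu : x ≠ u) (hxv : x ≠ v) : Psi (contract G u v) x = Psi G x :=
  Fintype.sum_eq_sum_of_merge huv (psi_contract_merged_right huv hnadj hcn hu hv x)
    psi_contract_isolated fun _ hwu hwv => psi_contract_of_ne huv hcn hxu hxv hwu hwv

theorem sum_Psi_contract (huv : u ≠ v) (hnadj : ¬G.Adj u v)
    (hcn : ∀ w, ¬(G.Adj u w ∧ G.Adj v w))
    (hu : ∀ x, G.Adj u x → deg G x ≤ deg G u) (hv : ∀ x, G.Adj v x → deg G x ≤ deg G v) :
    ∑ x, Psi (contract G u v) x = ∑ x, Psi G x :=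
  Fintype.sum_eq_sum_of_merge huv (Psi_contract_merged huv hnadj hcn hu hv)
    Psi_contract_isolated fun _ hxu hxv => Psi_contract_of_ne huv hnadj hcn hu hv hxu hxv

end CF

theorem contraction_stationary_distribution_general
    {V : Type*} [Fintype V]
    (G : SimpleGraph V) (u v : V) (huv : u ≠ v)
    (hnadj : ¬ G.Adj u v) (hdist : 2 < G.dist u v)
    (hu : ∀ x : V, G.Adj u x → CF.deg G x ≤ CF.deg G u)
    (hv : ∀ x : V, G.Adj v x → CF.deg G x ≤ CF.deg G v) :
    CF.statPi (CF.contract G u v) u = CF.statPi G u + CF.statPi G v ∧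
    ∀ x : V, x ≠ u → x ≠ v → CF.statPi (CF.contract G u v) x = CF.statPi G x := by
  have hcn := G.not_adj_and_adj_of_two_lt_dist hdist
  have htotal := CF.sum_Psi_contract huv hnadj hcn hu hv
  refine ⟨?_, fun x hxu hxv => ?_⟩
  · rw [CF.statPi, CF.statPi, CF.statPi, CF.Psi_contract_merged huv hnadj hcn hu hv, htotal,
      add_div]
  · rw [CF.statPi, CF.statPi, CF.Psi_contract_of_ne huv hnadj hcn hu hv hxu hxv, htotal]

/-- Let `u ≠ v` be non-adjacent vertices of a connected graph `G` at
distance `> 2`, each of maximal degree in its neighbourhood, and let `Γ` be the graph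
obtained by contracting `u` and `v` into a single vertex `z` (represented here by `u`).
Then the stationary distribution of the biased walk on `Γ` satisfies
`π_Γ(z) = π_G(u) + π_G(v)`, and `π_Γ(x) = π_G(x)` for every `x ∉ {u,v}`. -/
theorem contraction_stationary_distribution
    {V : Type*} [Fintype V] [DecidableEq V]
    (G : SimpleGraph V) (hG : G.Connected) (u v : V) (huv : u ≠ v)
    (hnadj : ¬ G.Adj u v) (hdist : 2 < G.dist u v)
    (hu : ∀ x : V, G.Adj u x → CF.deg G x ≤ CF.deg G u)
    (hv : ∀ x : V, G.Adj v x → CF.deg G x ≤ CF.deg G v) :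
    CF.statPi (CF.contract G u v) u = CF.statPi G u + CF.statPi G v ∧
    ∀ x : V, x ≠ u → x ≠ v → CF.statPi (CF.contract G u v) x = CF.statPi G x :=
  contraction_stationary_distribution_general G u v huv hnadj hdist hu hv
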